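/- The extended η-μ SNR density f(γ) = (1/Γ(μ)) · ((μξ/γ̄)(p/η)^{p/(1+p)})^μ · γ^{μ-1} · e^{-μξγ/γ̄} · ₁F₁(μp/(1+p); μ; μξ(η - p)γ/(η γ̄)) integrates to 1 over (0, ∞), i.e., it is a probability density. -/

import Mathlib

open MeasureTheory Real Set

/-- Rising factorial (Pochhammer symbol) `(x)_n`. -/
noncomputable def pochh (x : ℝ) (n : ℕ) : ℝ := ∏ i ∈ Finset.range n, (x + i)

/-- Kummer's confluent hypergeometric function `₁F₁(a; b; z)`. -/
noncomputable def oneF1 (a b z : ℝ) : ℝ :=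
  ∑' n : ℕ, pochh a n * z ^ n / (pochh b n * n.factorial)

/-- Humbert's two-variable confluent hypergeometric function `Φ₂`. -/
noncomputable def Phi2 (b1 b2 c x y : ℝ) : ℝ :=
  ∑' q : ℕ × ℕ, pochh b1 q.1 * pochh b2 q.2 * x ^ q.1 * y ^ q.2 /
    (pochh c (q.1 + q.2) * q.1.factorial * q.2.factorial)

/-- `N`-variable confluent hypergeometric function `Φ₂^{(N)}`. -/
noncomputable def PhiN {ι : Type*} [Fintype ι] (b : ι → ℝ) (c : ℝ) (x : ι → ℝ) : ℝ :=
  ∑' m : ι → ℕ,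
    (∏ i, pochh (b i) (m i) * x i ^ m i / (m i).factorial) / pochh c (∑ i, m i)

/-- Lauricella `F_D` (Appell `F₁`) of two variables. -/
noncomputable def FD2 (a b1 b2 c y1 y2 : ℝ) : ℝ :=
  ∑' q : ℕ × ℕ, pochh a (q.1 + q.2) * pochh b1 q.1 * pochh b2 q.2 * y1 ^ q.1 * y2 ^ q.2 /
    (pochh c (q.1 + q.2) * q.1.factorial * q.2.factorial)

/-- The extended η-μ instantaneous SNR probability density function. -/
noncomputable def extEtaMuPDF (μ γbar η p γ : ℝ) : ℝ :=
  (1 / Real.Gamma μ) *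
    ((μ * ((1 + η) / (1 + p)) / γbar) * (p / η) ^ (p / (1 + p))) ^ μ *
    γ ^ (μ - 1) * Real.exp (-(μ * ((1 + η) / (1 + p)) / γbar) * γ) *
    oneF1 (μ * p / (1 + p)) μ (μ * ((1 + η) / (1 + p)) * (η - p) / (η * γbar) * γ)

section auxlemmas

lemma pochh_zero' (x : ℝ) : pochh x 0 = 1 := by simp [pochh]

lemma pochh_succ (x : ℝ) (n : ℕ) : pochh x (n+1) = pochh x n * (x + n) := by
  simp [pochh, Finset.prod_range_succ]

lemma pochh_succ_left (x : ℝ) (n : ℕ) : pochh x (n+1) = x * pochh (x+1) n := by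
  induction n with
  | zero => simp [pochh]
  | succ n ih => rw [pochh_succ, ih, pochh_succ]; push_cast; ring

lemma pochh_pos {x : ℝ} (hx : 0 < x) (n : ℕ) : 0 < pochh x n :=
  Finset.prod_pos fun i _ => by positivity

lemma pochh_add (x : ℝ) (i j : ℕ) : pochh x (i + j) = pochh x i * pochh (x + i) j := by
  induction j with
  | zero => simp [pochh]
  | succ j ih =>
    rw [show i + (j+1) = (i+j)+1 from rfl, pochh_succ, ih, pochh_succ]
    push_cast; ring

lemma pochh_le {a b : ℝ} (ha : 0 < a) (hab : a ≤ b) (n : ℕ) : pochh a n ≤ pochh b n :=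
  Finset.prod_le_prod (fun i _ => by positivity) (fun i _ => by gcongr)

lemma Gamma_pochh {a : ℝ} (ha : 0 < a) (n : ℕ) :
    Real.Gamma (a + n) = pochh a n * Real.Gamma a := by
  induction n with
  | zero => simp [pochh]
  | succ n ih =>
    have h0 : (0:ℝ) < a + n := by positivity
    have h1 : a + ((n:ℕ)+1 : ℕ) = (a + n) + 1 := by push_cast; ring
    rw [h1, Real.Gamma_add_one h0.ne', ih, pochh_succ]; ring

lemma summable_abs_pochh {a μ : ℝ} (ha : 0 < a) (haμ : a ≤ μ) (z : ℝ) :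
    Summable (fun n : ℕ => |pochh a n * z ^ n / (pochh μ n * n.factorial)|) := by
  have hμ : 0 < μ := ha.trans_le haμ
  refine Summable.of_nonneg_of_le (fun n => abs_nonneg _) (fun n => ?_)
    (Real.summable_pow_div_factorial |z|)
  have h1 : 0 < pochh μ n := pochh_pos hμ n
  rw [abs_div, abs_mul, abs_mul, abs_pow, abs_of_pos (pochh_pos ha n), abs_of_pos h1,
    Nat.abs_cast]
  rw [div_le_div_iff₀ (by positivity) (by positivity)]
  have h2 := pochh_le ha haμ n
  have hz : (0:ℝ) ≤ |z| ^ n := by positivity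
  have h3 : (0:ℝ) < (n.factorial : ℝ) := by exact_mod_cast n.factorial_pos
  nlinarith [mul_le_mul_of_nonneg_right h2 hz]

lemma summable_oneF1 {a μ : ℝ} (ha : 0 < a) (haμ : a ≤ μ) (z : ℝ) :
    Summable (fun n : ℕ => pochh a n * z ^ n / (pochh μ n * n.factorial)) :=
  (summable_abs_pochh ha haμ z).of_abs

lemma summable_pochh_exp (a : ℝ) {x : ℝ} (hx : |x| < 1) :
    Summable (fun n : ℕ => pochh a n * x ^ n / n.factorial) := by
  set r : ℝ := (1 + |x|) / 2 with hr_def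
  have hxr : |x| < r := by rw [hr_def]; linarith [abs_nonneg x]
  have hr1 : r < 1 := by rw [hr_def]; linarith
  have hr0 : 0 < r := by positivity
  set d : ℝ := r - |x| with hd_def
  have hd : 0 < d := by simp [hd_def]; linarith
  set N : ℕ := ⌈|a| * |x| / d⌉₊ with hN_def
  have hNd : |a| * |x| ≤ N * d := by
    rw [← div_le_iff₀ hd]
    exact Nat.le_ceil _
  apply summable_of_ratio_norm_eventually_le hr1
  filter_upwards [Filter.eventually_ge_atTop N] with n hn
  have hn' : (N:ℝ) ≤ n := Nat.cast_le.mpr hn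
  have hfact : ((n.factorial : ℝ)) ≠ 0 := Nat.cast_ne_zero.mpr n.factorial_pos.ne'
  have key : pochh a (n+1) * x ^ (n+1) / (n+1).factorial
      = (pochh a n * x ^ n / n.factorial) * ((a + n) * x / (n + 1)) := by
    rw [pochh_succ, pow_succ, Nat.factorial_succ]
    push_cast
    field_simp
  rw [key, Real.norm_eq_abs, Real.norm_eq_abs, abs_mul]
  have hb : |(a + n) * x / (n + 1)| ≤ r := by
    rw [abs_div, abs_mul]
    rw [div_le_iff₀ (by positivity : (0:ℝ) < |(n:ℝ) + 1|)]
    have h1 : |a + (n:ℝ)| ≤ |a| + n := by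
      calc |a + (n:ℝ)| ≤ |a| + |(n:ℝ)| := abs_add_le _ _
      _ = |a| + n := by rw [Nat.abs_cast]
    have h2 : |(n:ℝ) + 1| = (n:ℝ) + 1 := abs_of_pos (by positivity)
    rw [h2]
    have hxnn : (0:ℝ) ≤ |x| := abs_nonneg x
    have hxr' : |x| ≤ r := hxr.le
    nlinarith [mul_le_mul_of_nonneg_right h1 hxnn]
  calc |pochh a n * x ^ n / n.factorial| * |(a + n) * x / (n + 1)|
      ≤ |pochh a n * x ^ n / n.factorial| * r := by
        exact mul_le_mul_of_nonneg_left hb (abs_nonneg _)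
    _ = r * |pochh a n * x ^ n / n.factorial| := mul_comm _ _

end auxlemmas
section integration

open MeasureTheory Real Set

lemma integrableOn_rpow_exp {t s : ℝ} (ht : 0 < t) (hs : 0 < s) :
    IntegrableOn (fun x : ℝ => x ^ (t - 1) * Real.exp (-(s * x))) (Ioi (0:ℝ)) := by
  have h1 : IntegrableOn (fun x : ℝ => Real.exp (-x) * x ^ (t-1)) (Ioi 0) :=
    Real.GammaIntegral_convergent ht
  have h1' : IntegrableOn (fun x : ℝ => Real.exp (-x) * x ^ (t-1)) (Ioi (s * 0)) := by
    simpa using h1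
  have h2 : IntegrableOn (fun x : ℝ => Real.exp (-(s*x)) * (s*x) ^ (t-1)) (Ioi 0) :=
    (integrableOn_Ioi_comp_mul_left_iff
      (fun x : ℝ => Real.exp (-x) * x ^ (t-1)) 0 hs).mpr h1'
  have h3 := h2.const_mul (s ^ (1 - t))
  refine IntegrableOn.congr_fun h3 (fun x hx => ?_) measurableSet_Ioi
  have hx' : (0:ℝ) < x := hx
  rw [Real.mul_rpow hs.le hx'.le]
  rw [show s ^ (1-t) * (Real.exp (-(s*x)) * (s ^ (t-1) * x ^ (t-1)))
    = (s ^ (1-t) * s ^ (t-1)) * (x ^ (t-1) * Real.exp (-(s*x))) from by ring]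
  rw [← Real.rpow_add hs, show (1-t) + (t-1) = 0 from by ring, Real.rpow_zero, one_mul]

lemma lintegral_nnnorm_eq {f : ℝ → ℝ} (hf : IntegrableOn f (Ioi 0))
    (h0 : ∀ x ∈ Ioi (0:ℝ), 0 ≤ f x) :
    ∫⁻ x in Ioi (0:ℝ), ‖f x‖₊ = ENNReal.ofReal (∫ x in Ioi (0:ℝ), f x) := by
  rw [ofReal_integral_eq_lintegral_ofReal hf
    ((ae_restrict_iff' measurableSet_Ioi).mpr (Filter.Eventually.of_forall h0))]
  apply lintegral_congr_ae
  filter_upwards [ae_restrict_mem measurableSet_Ioi] with x hx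
  exact Real.enorm_eq_ofReal (h0 x hx)

lemma tsum_lintegral_ne_top {F : ℕ → ℝ → ℝ} (hint : ∀ n, IntegrableOn (F n) (Ioi 0))
    (h0 : ∀ n, ∀ x ∈ Ioi (0:ℝ), 0 ≤ F n x)
    (hs : Summable (fun n => ∫ x in Ioi (0:ℝ), F n x)) :
    ∑' n, ∫⁻ x in Ioi (0:ℝ), ‖F n x‖₊ ≠ ⊤ := by
  have h1 : ∀ n : ℕ, ∫⁻ x in Ioi (0:ℝ), ‖F n x‖₊ = ENNReal.ofReal (∫ x in Ioi (0:ℝ), F n x) :=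
    fun n => lintegral_nnnorm_eq (hint n) (h0 n)
  rw [tsum_congr h1, ← ENNReal.ofReal_tsum_of_nonneg
    (fun n => setIntegral_nonneg measurableSet_Ioi (h0 n)) hs]
  exact ENNReal.ofReal_ne_top

lemma integral_tsum_Ioi {F : ℕ → ℝ → ℝ}
    (hm : ∀ n, AEStronglyMeasurable (F n) (volume.restrict (Ioi 0)))
    (hint : ∀ n, IntegrableOn (F n) (Ioi 0))
    (h0 : ∀ n, ∀ x ∈ Ioi (0:ℝ), 0 ≤ F n x)
    (hs : Summable (fun n => ∫ x in Ioi (0:ℝ), F n x)) :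
    ∫ x in Ioi (0:ℝ), ∑' n, F n x = ∑' n, ∫ x in Ioi (0:ℝ), F n x :=
  integral_tsum hm (tsum_lintegral_ne_top hint h0 hs)

lemma exp_tsum (z : ℝ) : Real.exp z = ∑' n : ℕ, z ^ n / n.factorial := by
  rw [Real.exp_eq_exp_ℝ, NormedSpace.exp_eq_tsum_div]

lemma binom {a x : ℝ} (ha : 0 < a) (hx0 : 0 ≤ x) (hx1 : x < 1) :
    ∑' n : ℕ, pochh a n * x ^ n / n.factorial = (1 - x) ^ (-a) := by
  have h1x : 0 < 1 - x := by linarith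
  have hΓ : 0 < Real.Gamma a := Real.Gamma_pos_of_pos ha
  set F : ℕ → ℝ → ℝ :=
    fun n t => x ^ n / n.factorial * (t ^ ((a + n) - 1) * Real.exp (-(1 * t))) with hF
  have hm : ∀ n, AEStronglyMeasurable (F n) (volume.restrict (Ioi 0)) := by
    intro n
    apply Measurable.aestronglyMeasurable
    fun_prop
  have hpos : ∀ n : ℕ, (0:ℝ) < a + n := fun n => by positivity
  have hint : ∀ n, IntegrableOn (F n) (Ioi 0) :=
    fun n => (integrableOn_rpow_exp (hpos n) one_pos).const_mul _
  have h0 : ∀ n, ∀ t ∈ Ioi (0:ℝ), 0 ≤ F n t := by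
    intro n t ht
    have ht' : (0:ℝ) < t := ht
    rw [hF]
    positivity
  have hvals : ∀ n : ℕ, ∫ t in Ioi (0:ℝ), F n t
      = pochh a n * x ^ n / n.factorial * Real.Gamma a := by
    intro n
    rw [hF]
    simp only
    rw [integral_const_mul, integral_rpow_mul_exp_neg_mul_Ioi (hpos n) one_pos,
      Gamma_pochh ha n]
    norm_num
    ring
  have hsum : Summable (fun n => ∫ t in Ioi (0:ℝ), F n t) := by
    rw [funext hvals]
    exact (summable_pochh_exp a (by rwa [abs_of_nonneg hx0])).mul_right _
  have key : ∫ t in Ioi (0:ℝ), t ^ (a - 1) * Real.exp (-((1-x) * t))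
      = ∑' n : ℕ, ∫ t in Ioi (0:ℝ), F n t := by
    rw [← integral_tsum_Ioi hm hint h0 hsum]
    apply setIntegral_congr_fun measurableSet_Ioi
    intro t ht
    have ht' : (0:ℝ) < t := ht
    show t ^ (a-1) * Real.exp (-((1-x)*t)) = ∑' n : ℕ, F n t
    have hFt : ∀ n : ℕ, F n t = (x * t) ^ n / n.factorial * (t ^ (a-1) * Real.exp (-(1*t))) := by
      intro n
      rw [hF]
      simp only
      rw [show (a + n) - 1 = (a - 1) + (n:ℝ) from by ring, Real.rpow_add ht',
        Real.rpow_natCast, mul_pow]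
      ring
    have hts : ∑' n : ℕ, F n t
        = Real.exp (x*t) * (t ^ (a-1) * Real.exp (-(1*t))) := by
      rw [tsum_congr hFt, tsum_mul_right, ← exp_tsum]
    rw [hts, show t ^ (a-1) * Real.exp (-((1-x)*t))
      = t ^ (a-1) * (Real.exp (-(1*t)) * Real.exp (x*t)) from by
        rw [← Real.exp_add]; congr 1; ring]
    ring
  rw [integral_rpow_mul_exp_neg_mul_Ioi ha h1x, tsum_congr hvals, tsum_mul_right] at key
  have : (1/(1-x)) ^ a = (1-x) ^ (-a) := by
    rw [one_div, ← Real.rpow_neg_one (1-x), ← Real.rpow_mul h1x.le]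
    norm_num
  rw [this] at key
  exact (mul_right_cancel₀ hΓ.ne' key).symm

end integration
section core

open MeasureTheory Real Set

lemma core_integral {a μ s z : ℝ} (ha : 0 < a) (haμ : a ≤ μ) (hs : 0 < s)
    (hz0 : 0 ≤ z) (hzs : z < s) :
    ∫ γ in Ioi (0:ℝ), γ ^ (μ - 1) * (Real.exp (-(s * γ)) * oneF1 a μ (z * γ)) =
      s ^ (a - μ) * (s - z) ^ (-a) * Real.Gamma μ := by
  have hμ : 0 < μ := ha.trans_le haμ
  have hΓ : 0 < Real.Gamma μ := Real.Gamma_pos_of_pos hμ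
  set F : ℕ → ℝ → ℝ := fun n γ =>
    pochh a n * z ^ n / (pochh μ n * n.factorial) * (γ ^ ((μ + n) - 1) * Real.exp (-(s * γ)))
    with hF
  have hm : ∀ n, AEStronglyMeasurable (F n) (volume.restrict (Ioi 0)) := by
    intro n
    apply Measurable.aestronglyMeasurable
    fun_prop
  have hpos : ∀ n : ℕ, (0:ℝ) < μ + n := fun n => by positivity
  have hint : ∀ n, IntegrableOn (F n) (Ioi 0) :=
    fun n => (integrableOn_rpow_exp (hpos n) hs).const_mul _
  have h0 : ∀ n, ∀ γ ∈ Ioi (0:ℝ), 0 ≤ F n γ := by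
    intro n γ hγ
    have hγ' : (0:ℝ) < γ := hγ
    have h1 : 0 < pochh a n := pochh_pos ha n
    have h2 : 0 < pochh μ n := pochh_pos hμ n
    rw [hF]
    positivity
  have hzs' : z / s < 1 := (div_lt_one hs).mpr hzs
  have hzs0 : 0 ≤ z / s := by positivity
  have hvals : ∀ n : ℕ, ∫ γ in Ioi (0:ℝ), F n γ
      = (Real.Gamma μ * (1/s) ^ μ) * (pochh a n * (z/s) ^ n / n.factorial) := by
    intro n
    rw [hF]
    simp only
    rw [integral_const_mul, integral_rpow_mul_exp_neg_mul_Ioi (hpos n) hs, Gamma_pochh hμ n]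
    have e1 : (1/s) ^ (μ + (n:ℕ)) = (1/s) ^ μ * (1/s) ^ (n:ℕ) := by
      rw [← Real.rpow_natCast (1/s) n, ← Real.rpow_add (by positivity)]
    rw [e1]
    have h2 : pochh μ n ≠ 0 := (pochh_pos hμ n).ne'
    have h3 : ((n.factorial : ℝ)) ≠ 0 := Nat.cast_ne_zero.mpr n.factorial_pos.ne'
    have h4 : (1/s) ^ (n:ℕ) = 1 / s ^ (n:ℕ) := by rw [div_pow, one_pow]
    have h5 : (z/s) ^ (n:ℕ) = z ^ (n:ℕ) / s ^ (n:ℕ) := div_pow z s n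
    rw [h4, h5]
    have h6 : (s:ℝ) ^ (n:ℕ) ≠ 0 := pow_ne_zero n hs.ne'
    field_simp
  have hsum : Summable (fun n => ∫ γ in Ioi (0:ℝ), F n γ) := by
    rw [funext hvals]
    exact ((summable_pochh_exp a (by rwa [abs_of_nonneg hzs0])).mul_left _)
  have key : ∫ γ in Ioi (0:ℝ), γ ^ (μ - 1) * (Real.exp (-(s * γ)) * oneF1 a μ (z * γ))
      = ∑' n : ℕ, ∫ γ in Ioi (0:ℝ), F n γ := by
    rw [← integral_tsum_Ioi hm hint h0 hsum]
    apply setIntegral_congr_fun measurableSet_Ioi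
    intro γ hγ
    have hγ' : (0:ℝ) < γ := hγ
    show γ ^ (μ - 1) * (Real.exp (-(s * γ)) * oneF1 a μ (z * γ)) = ∑' n : ℕ, F n γ
    have hFγ : ∀ n : ℕ, F n γ =
        pochh a n * (z * γ) ^ n / (pochh μ n * n.factorial)
          * (γ ^ (μ - 1) * Real.exp (-(s * γ))) := by
      intro n
      rw [hF]
      simp only
      rw [show (μ + n) - 1 = (μ - 1) + (n:ℝ) from by ring, Real.rpow_add hγ',
        Real.rpow_natCast, mul_pow]
      ring
    rw [tsum_congr hFγ, tsum_mul_right, oneF1]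
    ring
  rw [key, tsum_congr hvals, tsum_mul_left, binom ha hzs0 hzs']
  have e1 : (1/s) ^ μ = s ^ (-μ) := by
    rw [one_div, ← Real.rpow_neg_one s, ← Real.rpow_mul hs.le]
    norm_num
  have e2 : ((1:ℝ) - z/s) = (s - z)/s := by field_simp
  have e3 : ((s - z)/s) ^ (-a) = (s-z) ^ (-a) * s ^ a := by
    rw [Real.div_rpow (by linarith) hs.le, div_eq_mul_inv, Real.rpow_neg hs.le, inv_inv]
  have e4 : s ^ (-μ) * s ^ a = s ^ (a - μ) := by
    rw [← Real.rpow_add hs]; congr 1; ring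
  rw [e1, e2, e3]
  calc Real.Gamma μ * s ^ (-μ) * ((s-z) ^ (-a) * s ^ a)
      = (s ^ (-μ) * s ^ a) * (s-z) ^ (-a) * Real.Gamma μ := by ring
    _ = s ^ (a - μ) * (s - z) ^ (-a) * Real.Gamma μ := by rw [e4]

end core
section kummer

open Polynomial Finset

lemma desc_eq (k : ℕ) (y : ℝ) :
    (descPochhammer ℤ k).smeval y = ∏ i ∈ Finset.range k, (y - i) := by
  induction k with
  | zero => simp [descPochhammer_zero, Polynomial.smeval_one]
  | succ k ih =>
    rw [descPochhammer_succ_right, Polynomial.smeval_mul, ih, Polynomial.smeval_sub,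
      Polynomial.smeval_X, Polynomial.smeval_natCast, Finset.prod_range_succ]
    simp [nsmul_eq_mul]

lemma prod_sub_eq_neg_pochh (k : ℕ) (y : ℝ) :
    ∏ i ∈ Finset.range k, (y - i) = (-1)^k * pochh (-y) k := by
  calc ∏ i ∈ Finset.range k, (y - (i:ℝ))
      = ∏ i ∈ Finset.range k, (-1) * (-y + i) := by
        apply Finset.prod_congr rfl; intros; ring
    _ = (-1)^k * pochh (-y) k := by
        rw [Finset.prod_mul_distrib, Finset.prod_const, Finset.card_range, pochh]

lemma prod_sub_eq_pochh (k : ℕ) (y : ℝ) :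
    ∏ i ∈ Finset.range k, (y - i) = pochh (y - k + 1) k := by
  induction k generalizing y with
  | zero => simp [pochh]
  | succ k ih =>
    rw [Finset.prod_range_succ, ih]
    have h1 : pochh (y - ((k:ℕ)+1:ℕ) + 1) (k+1) = (y - k) * pochh (y - k + 1) k := by
      rw [pochh_succ_left]
      have h2 : y - ((k:ℕ)+1:ℕ) + 1 = y - k := by push_cast; ring
      rw [h2]
    rw [h1]
    ring

lemma vandermonde (a μ : ℝ) (n : ℕ) :
    pochh a n = ∑ ij ∈ Finset.HasAntidiagonal.antidiagonal n,
      (n.choose ij.1 : ℝ) * (pochh (μ + ij.2) ij.1 * ((-1)^ij.2 * pochh (μ - a) ij.2)) := by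
  have h := Ring.descPochhammer_smeval_add (R := ℝ) (r := μ + n - 1) (s := a - μ) n (Commute.all _ _)
  have hL : (descPochhammer ℤ n).smeval ((μ + n - 1) + (a - μ)) = pochh a n := by
    rw [desc_eq, prod_sub_eq_pochh, show (μ + n - 1) + (a - μ) - n + 1 = a from by ring]
  rw [hL] at h
  rw [h]
  apply Finset.sum_congr rfl
  intro ij hij
  have hij' : ij.1 + ij.2 = n := Finset.HasAntidiagonal.mem_antidiagonal.mp hij
  have hc : ((ij.1:ℝ) + ij.2) = n := by exact_mod_cast congrArg (Nat.cast : ℕ → ℝ) hij'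
  have hA : (descPochhammer ℤ ij.1).smeval (μ + n - 1) = pochh (μ + ij.2) ij.1 := by
    rw [desc_eq, prod_sub_eq_pochh, show μ + (n:ℝ) - 1 - ij.1 + 1 = μ + ij.2 from by
      rw [← hc]; ring]
  have hB : (descPochhammer ℤ ij.2).smeval (a - μ) = (-1)^ij.2 * pochh (μ - a) ij.2 := by
    rw [desc_eq, prod_sub_eq_neg_pochh, show -(a - μ) = μ - a from by ring]
  rw [hA, hB]

end kummer
section final

open MeasureTheory Real Set

lemma kummer {a μ : ℝ} (ha : 0 < a) (haμ : a < μ) (z : ℝ) :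
    oneF1 a μ z = Real.exp z * oneF1 (μ - a) μ (-z) := by
  have hμ : 0 < μ := ha.trans haμ
  have hμa : 0 < μ - a := by linarith
  have hf : Summable (fun n : ℕ => ‖z ^ n / (n.factorial : ℝ)‖) :=
    (Real.summable_pow_div_factorial |z|).congr (fun n => by
      rw [Real.norm_eq_abs, abs_div, abs_pow, Nat.abs_cast])
  have hg : Summable (fun n : ℕ => ‖pochh (μ-a) n * (-z) ^ n / (pochh μ n * n.factorial)‖) :=
    (summable_abs_pochh hμa (by linarith) (-z)).congr (fun n => (Real.norm_eq_abs _).symm)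
  rw [exp_tsum, oneF1, oneF1, tsum_mul_tsum_eq_tsum_sum_antidiagonal_of_summable_norm hf hg]
  apply tsum_congr
  intro n
  rw [vandermonde a μ n, Finset.sum_mul, Finset.sum_div]
  apply Finset.sum_congr rfl
  intro ij hij
  obtain ⟨i, j⟩ := ij
  have hij' : i + j = n := Finset.HasAntidiagonal.mem_antidiagonal.mp hij
  subst hij'
  simp only
  have hpj : pochh μ (i+j) = pochh μ j * pochh (μ+j) i := by
    rw [show i+j = j+i from add_comm i j, pochh_add]
  have hfact : (((i+j).factorial : ℕ) : ℝ)
      = ((i+j).choose i : ℝ) * (i.factorial : ℝ) * (j.factorial : ℝ) := by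
    have h := Nat.choose_mul_factorial_mul_factorial (Nat.le_add_right i j)
    rw [Nat.add_sub_cancel_left] at h
    exact_mod_cast h.symm
  have hz : z^(i+j) = z^i * z^j := pow_add z i j
  have hnz : (-z)^j = (-1)^j * z^j := by rw [neg_pow]
  have ne1 : pochh μ j ≠ 0 := (pochh_pos hμ j).ne'
  have ne2 : pochh (μ+j) i ≠ 0 := (pochh_pos (by positivity) i).ne'
  have ne3 : ((i.factorial : ℕ) : ℝ) ≠ 0 := Nat.cast_ne_zero.mpr i.factorial_pos.ne'
  have ne4 : ((j.factorial : ℕ) : ℝ) ≠ 0 := Nat.cast_ne_zero.mpr j.factorial_pos.ne'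
  have ne5 : (((i+j).choose i : ℕ) : ℝ) ≠ 0 :=
    Nat.cast_ne_zero.mpr (Nat.choose_pos (Nat.le_add_right i j)).ne'
  rw [hpj, hfact, hz, hnz]
  field_simp

lemma core_integral' {a μ s z : ℝ} (ha : 0 < a) (haμ : a < μ) (hs : 0 < s) (hzs : z < s) :
    ∫ γ in Ioi (0:ℝ), γ ^ (μ - 1) * (Real.exp (-(s * γ)) * oneF1 a μ (z * γ)) =
      s ^ (a - μ) * (s - z) ^ (-a) * Real.Gamma μ := by
  rcases le_or_gt 0 z with hz | hz
  · exact core_integral ha haμ.le hs hz hzs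
  · have h1 : ∀ γ : ℝ, γ ^ (μ-1) * (Real.exp (-(s*γ)) * oneF1 a μ (z*γ))
        = γ ^ (μ-1) * (Real.exp (-((s-z)*γ)) * oneF1 (μ-a) μ ((-z)*γ)) := by
      intro γ
      rw [kummer ha haμ (z*γ), show -(z*γ) = (-z)*γ from by ring]
      rw [show Real.exp (-(s*γ)) * (Real.exp (z*γ) * oneF1 (μ-a) μ ((-z)*γ))
        = (Real.exp (-(s*γ)) * Real.exp (z*γ)) * oneF1 (μ-a) μ ((-z)*γ) from by ring,
        ← Real.exp_add, show -(s*γ) + z*γ = -((s-z)*γ) from by ring]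
    have h2 := core_integral (a := μ-a) (μ := μ) (s := s-z) (z := -z)
      (by linarith) (by linarith) (by linarith) (by linarith) (by linarith)
    rw [show ((μ:ℝ)-a) - μ = -a from by ring, show (s - z) - (-z) = s from by ring,
      show -(μ - a) = a - μ from by ring] at h2
    calc ∫ γ in Ioi (0:ℝ), γ ^ (μ - 1) * (Real.exp (-(s * γ)) * oneF1 a μ (z * γ))
        = ∫ γ in Ioi (0:ℝ), γ ^ (μ-1) * (Real.exp (-((s-z)*γ)) * oneF1 (μ-a) μ ((-z)*γ)) :=
          setIntegral_congr_fun measurableSet_Ioi (fun γ _ => h1 γ)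
      _ = (s-z) ^ (-a) * s ^ (a - μ) * Real.Gamma μ := h2
      _ = s ^ (a - μ) * (s - z) ^ (-a) * Real.Gamma μ := by ring

end final
section main

open MeasureTheory Real Set


theorem stmt3 (μ γbar η p : ℝ) (hμ : 0 < μ) (hγ : 0 < γbar) (hη : 0 < η) (hp : 0 < p) :
    ∫ γ in Ioi (0 : ℝ), extEtaMuPDF μ γbar η p γ = 1 := by

  have h1p : (0:ℝ) < 1 + p := by linarith
  set s := μ * ((1 + η) / (1 + p)) / γbar with hs_def
  set a := μ * p / (1 + p) with ha_def
  set z := μ * ((1 + η) / (1 + p)) * (η - p) / (η * γbar) with hz_def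
  have hs : 0 < s := by rw [hs_def]; positivity
  have ha : 0 < a := by rw [ha_def]; positivity
  have haμ : a < μ := by
    rw [ha_def, div_lt_iff₀ h1p]
    nlinarith
  have hq : (0:ℝ) < p / η := by positivity
  have hsz : s - z = s * (p / η) := by
    rw [hs_def, hz_def]
    field_simp
    ring
  have hzs : z < s := by
    have h2 : 0 < s * (p / η) := by positivity
    linarith
  have hΓ : Real.Gamma μ ≠ 0 := (Real.Gamma_pos_of_pos hμ).ne'
  calc ∫ γ in Ioi (0:ℝ), extEtaMuPDF μ γbar η p γ
      = ∫ γ in Ioi (0:ℝ), (1 / Real.Gamma μ * (s * (p / η) ^ (p / (1 + p))) ^ μ) *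
          (γ ^ (μ - 1) * (Real.exp (-(s * γ)) * oneF1 a μ (z * γ))) := by
        apply setIntegral_congr_fun measurableSet_Ioi
        intro γ _
        simp only [extEtaMuPDF]
        rw [← hz_def, ← hs_def, ← ha_def, neg_mul]
        ring
    _ = (1 / Real.Gamma μ * (s * (p / η) ^ (p / (1 + p))) ^ μ) *
          (s ^ (a - μ) * (s - z) ^ (-a) * Real.Gamma μ) := by
        rw [integral_const_mul, core_integral' ha haμ hs hzs]
    _ = 1 := by
        rw [hsz]
        have e1 : (s * (p/η) ^ (p/(1+p))) ^ μ = s ^ μ * (p/η) ^ (p/(1+p) * μ) := by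
          rw [Real.mul_rpow hs.le (by positivity), ← Real.rpow_mul hq.le]
        have e2 : (s * (p/η)) ^ (-a) = s ^ (-a) * (p/η) ^ (-a) :=
          Real.mul_rpow hs.le hq.le
        rw [e1, e2]
        have e3 : s ^ μ * s ^ (a - μ) * s ^ (-a) = 1 := by
          rw [← Real.rpow_add hs, ← Real.rpow_add hs,
            show μ + (a - μ) + -a = 0 from by ring, Real.rpow_zero]
        have e4 : (p/η) ^ (p/(1+p) * μ) * (p/η) ^ (-a) = 1 := by
          rw [← Real.rpow_add hq, ha_def,
            show p/(1+p) * μ + -(μ * p / (1+p)) = 0 from by ring, Real.rpow_zero]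
        calc 1 / Real.Gamma μ * (s ^ μ * (p/η) ^ (p/(1+p) * μ)) *
              (s ^ (a - μ) * (s ^ (-a) * (p/η) ^ (-a)) * Real.Gamma μ)
            = (s ^ μ * s ^ (a - μ) * s ^ (-a)) * ((p/η) ^ (p/(1+p) * μ) * (p/η) ^ (-a)) *
              (Real.Gamma μ * (1 / Real.Gamma μ)) := by ring
          _ = 1 := by rw [e3, e4, mul_one_div, div_self hΓ]; norm_num
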